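/- For each real E and x ≠ 0, the functions ψ_±^E with ψ_+^E(x) = (1/(2√π))|x|^{-(iE+1/2)} and ψ_-^E(x) = (1/(2√π)) sgn(x) |x|^{-(iE+1/2)} satisfy (1/4)∫_{-∞}^{∞} sech(ξ/2) e^{ξ/2} ψ_±^E(-e^ξ x) dξ = ± (π/2) sech(πE) ψ_±^E(x). -/

import Mathlib

/-!
Both `ψ_±^E` are homogeneous of degree `-(iE + 1/2)`, with `ψ_+` even and `ψ_-` odd, so the
integrand is `±ψ_±^E(x)` times `sech(ξ/2) e^{ξ/2} e^{-sξ} = 2 σ(ξ) e^{-sξ}`, where `s = iE + 1/2`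
and `σ` is the logistic sigmoid. The substitution `t = σ(ξ)` turns `∫ σ(ξ) e^{-sξ} dξ` into the
Beta integral `B(1 - s, s) = Γ(1 - s) Γ(s) = π / sin(πs)`, and `sin(π(iE + 1/2)) = cosh(πE)`.
-/

open Real MeasureTheory

noncomputable def psiPlus (E : ℝ) (x : ℝ) : ℂ :=
  ((1 / (2 * Real.sqrt Real.pi) : ℝ) : ℂ) *
    ((|x| : ℝ) : ℂ) ^ (-(Complex.I * E + 1 / 2))

noncomputable def psiMinus (E : ℝ) (x : ℝ) : ℂ :=
  ((Real.sign x / (2 * Real.sqrt Real.pi) : ℝ) : ℂ) *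
    ((|x| : ℝ) : ℂ) ^ (-(Complex.I * E + 1 / 2))

theorem Real.sign_mul_of_pos {a : ℝ} (ha : 0 < a) (x : ℝ) : Real.sign (a * x) = Real.sign x := by
  rcases lt_trichotomy x 0 with h | rfl | h
  · rw [Real.sign_of_neg h, Real.sign_of_neg (mul_neg_of_pos_of_neg ha h)]
  · simp
  · rw [Real.sign_of_pos h, Real.sign_of_pos (mul_pos ha h)]

theorem one_div_cosh_half_mul_exp_half (ξ : ℝ) :
    1 / Real.cosh (ξ / 2) * Real.exp (ξ / 2) = 2 * sigmoid ξ := by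
  rw [Real.cosh_eq, sigmoid_def]
  field_simp
  rw [mul_add, mul_one, ← Real.exp_add]
  ring_nf

namespace Complex

theorem ofReal_exp_cpow (x : ℝ) (w : ℂ) : ((Real.exp x : ℝ) : ℂ) ^ w = cexp (x * w) := by
  rw [cpow_def_of_ne_zero (by exact_mod_cast (Real.exp_pos x).ne'),
    ← ofReal_log (Real.exp_pos x).le, Real.log_exp]

theorem betaIntegral_one_sub_eq_integral_sigmoid (s : ℂ) :
    betaIntegral (1 - s) s = ∫ ξ : ℝ, (sigmoid ξ : ℂ) * cexp (-(ξ * s)) := by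
  rw [betaIntegral, intervalIntegral.integral_of_le zero_le_one, integral_Ioc_eq_integral_Ioo,
    ← range_sigmoid, ← Set.image_univ, integral_image_eq_integral_abs_deriv_smul
      MeasurableSet.univ (fun ξ _ ↦ (hasDerivAt_sigmoid ξ).hasDerivWithinAt)
      sigmoid_injective.injOn, Measure.restrict_univ]
  congr 1
  ext ξ
  have hσ : (sigmoid ξ : ℂ) ≠ 0 := by exact_mod_cast (sigmoid_pos ξ).ne'
  have hcompl : 1 - (sigmoid ξ : ℂ) = (sigmoid ξ : ℂ) * (Real.exp (-ξ) : ℝ) := by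
    exact_mod_cast (sigmoid_neg ξ ▸ sigmoid_mul_rexp_neg ξ).symm
  rw [abs_of_pos (mul_pos (sigmoid_pos ξ) (sub_pos.2 (sigmoid_lt_one ξ))), real_smul,
    sub_sub_cancel_left, hcompl,
    mul_cpow_ofReal_nonneg (sigmoid_pos ξ).le (Real.exp_pos _).le, ofReal_exp_cpow,
    ← mul_assoc (_ ^ (-s)), ← cpow_add _ _ hσ, show -s + (s - 1) = -1 by ring, cpow_neg_one]
  push_cast
  field_simp
  rw [hcompl, ofReal_exp, mul_assoc, ← Complex.exp_add]
  push_cast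
  ring_nf

theorem integral_sigmoid_mul_cexp_neg {s : ℂ} (hs0 : 0 < s.re) (hs1 : s.re < 1) :
    ∫ ξ : ℝ, (sigmoid ξ : ℂ) * cexp (-(ξ * s)) = π / sin (π * s) := by
  have hΓ := Gamma_mul_Gamma_eq_betaIntegral (s := 1 - s) (t := s) (by simpa using hs1) hs0
  rw [sub_add_cancel, Gamma_one, one_mul, mul_comm, Gamma_mul_Gamma_one_sub,
    betaIntegral_one_sub_eq_integral_sigmoid] at hΓ
  exact hΓ.symm

theorem integral_sech_half_mul_exp_half_mul_cexp (E : ℝ) :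
    ∫ ξ : ℝ, ((1 / Real.cosh (ξ / 2) * Real.exp (ξ / 2) : ℝ) : ℂ) * cexp (-(ξ * (I * E + 1 / 2)))
      = 2 * π / Real.cosh (π * E) := by
  simp_rw [one_div_cosh_half_mul_exp_half, ofReal_mul, ofReal_ofNat, mul_assoc]
  rw [integral_const_mul, integral_sigmoid_mul_cexp_neg (by simp) (by norm_num),
    show (π : ℂ) * (I * E + 1 / 2) = (π * E : ℝ) * I + π / 2 by push_cast; ring,
    sin_add_pi_div_two, cos_mul_I, ofReal_cosh]
  ring

theorem ofReal_abs_neg_exp_mul_cpow (ξ x : ℝ) (w : ℂ) :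
    ((|-(Real.exp ξ) * x| : ℝ) : ℂ) ^ w = cexp (ξ * w) * ((|x| : ℝ) : ℂ) ^ w := by
  rw [neg_mul, abs_neg, abs_mul, Real.abs_exp, ofReal_mul,
    mul_cpow_ofReal_nonneg (Real.exp_pos ξ).le (abs_nonneg x), ofReal_exp_cpow]

end Complex

open Complex

theorem psiPlus_neg_exp_mul (E ξ x : ℝ) :
    psiPlus E (-(Real.exp ξ) * x) = cexp (-(ξ * (I * E + 1 / 2))) * psiPlus E x := by
  rw [psiPlus, psiPlus, ofReal_abs_neg_exp_mul_cpow, mul_neg]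
  ring

theorem psiMinus_neg_exp_mul (E ξ x : ℝ) :
    psiMinus E (-(Real.exp ξ) * x) = -(cexp (-(ξ * (I * E + 1 / 2))) * psiMinus E x) := by
  rw [psiMinus, psiMinus, ofReal_abs_neg_exp_mul_cpow, mul_neg, neg_mul, Real.sign_neg,
    Real.sign_mul_of_pos (Real.exp_pos ξ)]
  push_cast
  ring

theorem BJ_generalized_eigenvalue (E x : ℝ) :
    ((1 / 4 : ℂ) * ∫ ξ : ℝ,
        ((1 / Real.cosh (ξ / 2) * Real.exp (ξ / 2) : ℝ) : ℂ) *
          psiPlus E (-(Real.exp ξ) * x) =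
      ((Real.pi / 2 * (1 / Real.cosh (Real.pi * E)) : ℝ) : ℂ) * psiPlus E x) ∧
    ((1 / 4 : ℂ) * ∫ ξ : ℝ,
        ((1 / Real.cosh (ξ / 2) * Real.exp (ξ / 2) : ℝ) : ℂ) *
          psiMinus E (-(Real.exp ξ) * x) =
      -(((Real.pi / 2 * (1 / Real.cosh (Real.pi * E)) : ℝ) : ℂ) * psiMinus E x)) := by
  have hcosh : (Real.cosh (π * E) : ℂ) ≠ 0 := ofReal_ne_zero.2 (Real.cosh_pos _).ne'
  constructor
  · simp_rw [psiPlus_neg_exp_mul, ← mul_assoc]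
    rw [integral_mul_const, integral_sech_half_mul_exp_half_mul_cexp]
    push_cast
    field_simp
    ring
  · simp_rw [psiMinus_neg_exp_mul, mul_neg, ← mul_assoc]
    rw [integral_neg, integral_mul_const, integral_sech_half_mul_exp_half_mul_cexp]
    push_cast
    field_simp
    ring
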